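/- For any vectors v_1,…,v_n in 𝔽^d (𝔽 = ℝ or ℂ), not all zero, and t ≥ 1, Σ_j Σ_k |⟨v_j,v_k⟩|^{2t} ≥ c_t(𝔽^d) · (Σ_ℓ ‖v_ℓ‖^{2t})², where c_t(ℝ^d) = (1·3·5⋯(2t−1))/(d(d+2)⋯(d+2t−2)) and c_t(ℂ^d) = 1/C(t+d−1, t). -/

import Mathlib

/-!
By the multinomial theorem, `⟪u, v⟫ ^ t = ∑ₘ M(m) conj(uᵐ) vᵐ` and `‖v‖ ^ (2t) = ∑ₘ M(m) ‖vᵐ‖²`,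
where `m` runs over the exponents of degree `t` in `d` variables and `M(m)` is the multinomial
coefficient.

Over `ℂ` (or any `RCLike` field) the double sum is thus the frame potential of the vectors of
weighted monomials `(vⱼᵐ)ₘ`. Expanding it as `∑_{m,m'} M(m) M(m') |∑ⱼ conj(vⱼᵐ) vⱼᵐ'|²`, keeping
only the diagonal `m = m'` and applying Cauchy–Schwarz over the `C(t+d-1, t)` exponents gives the
bound.

Over `ℝ` one expands `⟪vⱼ, vₖ⟫ ^ (2t)` instead, which gives `∑ₛ M(s) Xₛ²` with `Xₛ = ∑ⱼ vⱼˢ`,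
while `∑ₗ ‖vₗ‖ ^ (2t) = ∑ₘ M(m) X₂ₘ` only sees the even exponents. Cauchy–Schwarz against the
weights `M(m)² / M(2m)` gives the bound, since `∑ₘ M(m)² / M(2m) = ∑ₘ ∏ₐ C(2mₐ, mₐ) / C(2t, t)`
equals `1 / c_t(ℝ^d)`: writing `C(2k, k) = (-4)ᵏ choose(-1/2, k)`, the numerator is evaluated by
the multivariate Chu–Vandermonde identity.
-/

/-- `c_t(ℝ^d) = (1·3·5⋯(2t−1))/(d(d+2)⋯(d+2t−2))`. -/
noncomputable def ctReal (d t : ℕ) : ℝ :=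
  (∏ i ∈ Finset.range t, (2 * i + 1 : ℝ)) /
    (∏ i ∈ Finset.range t, ((d : ℝ) + 2 * i))

/-- `c_t(ℂ^d) = 1/C(t+d−1, t)`. -/
noncomputable def ctComplex (d t : ℕ) : ℝ :=
  1 / (Nat.choose (t + d - 1) t : ℝ)

open Finset
open scoped ComplexConjugate

theorem Ring.choose_sum_eq_sum_piAntidiag {R α : Type*} [CommRing R] [BinomialRing R]
    [DecidableEq α] (s : Finset α) (x : α → R) (t : ℕ) :
    Ring.choose (∑ a ∈ s, x a) t = ∑ m ∈ piAntidiag s t, ∏ a ∈ s, Ring.choose (x a) (m a) := by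
  have hprod : PowerSeries.binomialSeries R (∑ a ∈ s, x a) =
      ∏ a ∈ s, PowerSeries.binomialSeries R (x a) := by
    induction s using Finset.cons_induction with
    | empty => simp
    | cons a s ha ih => rw [sum_cons, prod_cons, PowerSeries.binomialSeries_add, ih]
  have hcoeff := congrArg (PowerSeries.coeff t) hprod
  simp only [PowerSeries.binomialSeries_coeff, PowerSeries.coeff_prod, smul_eq_mul,
    mul_one] at hcoeff
  rw [hcoeff, finsuppAntidiag, sum_map]
  exact sum_attach (piAntidiag s t) fun m => ∏ a ∈ s, Ring.choose (x a) (m a)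

theorem Nat.centralBinom_mul_factorial (n : ℕ) :
    n.centralBinom * n.factorial = 2 ^ n * ∏ j ∈ range n, (1 + 2 * j) := by
  induction n with
  | zero => simp
  | succ n ih =>
    rw [Nat.factorial_succ, mul_left_comm, ← mul_assoc, Nat.succ_mul_centralBinom_succ,
      mul_assoc, ih, prod_range_succ]
    ring

theorem Nat.factorial_two_mul_eq_centralBinom_mul_sq (n : ℕ) :
    (2 * n).factorial = n.centralBinom * n.factorial ^ 2 := by
  rw [Nat.centralBinom_eq_two_mul_choose, sq, ← mul_assoc]
  conv_rhs => enter [2]; rw [show n = 2 * n - n by omega]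
  exact (Nat.choose_mul_factorial_mul_factorial (by omega)).symm

section Field

variable {K : Type*} [Field K] [CharZero K]

theorem Ring.choose_eq_prod_range_div_factorial (a : K) (n : ℕ) :
    Ring.choose a n = (∏ j ∈ range n, (a - j)) / n.factorial := by
  rw [Ring.choose_eq_smul, ← Polynomial.eval₂_smulOneHom_eq_smeval, ← Polynomial.eval_map,
    descPochhammer_map, descPochhammer_eval_eq_prod_range, smul_eq_mul, inv_mul_eq_div]

theorem Ring.choose_neg_div_two (c : K) (n : ℕ) :
    Ring.choose (-(c / 2)) n = (∏ j ∈ range n, (c + 2 * j)) * ((-2)⁻¹ ^ n / n.factorial) := by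
  have hpow : (-2 : K)⁻¹ ^ n = ∏ _j ∈ range n, (-2)⁻¹ := by simp
  rw [Ring.choose_eq_prod_range_div_factorial, hpow, ← mul_div_assoc, ← prod_mul_distrib]
  congr 2 with j
  ring

theorem Nat.centralBinom_eq_neg_four_pow_mul_choose (n : ℕ) :
    (n.centralBinom : K) = (-4) ^ n * Ring.choose (-(1 / 2) : K) n := by
  have h : (n.centralBinom : K) * n.factorial = 2 ^ n * ∏ j ∈ range n, (1 + 2 * (j : K)) := by
    exact_mod_cast n.centralBinom_mul_factorial
  rw [Ring.choose_neg_div_two, ← mul_div_assoc, ← mul_div_assoc,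
    eq_div_iff (Nat.cast_ne_zero.2 n.factorial_ne_zero), h, mul_left_comm, ← mul_pow, mul_comm]
  norm_num

theorem Finset.sum_piAntidiag_prod_centralBinom {α : Type*} [DecidableEq α] (s : Finset α)
    (t : ℕ) :
    ∑ m ∈ piAntidiag s t, ∏ a ∈ s, ((m a).centralBinom : K) =
      (-4) ^ t * Ring.choose (-(#s / 2) : K) t := by
  have hsum : (-(#s / 2) : K) = ∑ _a ∈ s, -(1 / 2) := by
    rw [sum_const, nsmul_eq_mul]
    ring
  rw [hsum, Ring.choose_sum_eq_sum_piAntidiag, mul_sum]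
  refine sum_congr rfl fun m hm => ?_
  simp only [Nat.centralBinom_eq_neg_four_pow_mul_choose, prod_mul_distrib, prod_pow_eq_pow_sum,
    (mem_piAntidiag.1 hm).1]

theorem Nat.cast_multinomial_eq_div {α : Type*} (s : Finset α) (m : α → ℕ) :
    (Nat.multinomial s m : K) = (∑ a ∈ s, m a).factorial / ∏ a ∈ s, ((m a).factorial : K) := by
  rw [eq_div_iff (prod_ne_zero_iff.2 fun a _ => Nat.cast_ne_zero.2 (m a).factorial_ne_zero),
    mul_comm]
  exact_mod_cast Nat.multinomial_spec s m

theorem Nat.multinomial_sq_div_multinomial_two_nsmul {α : Type*} (s : Finset α) (m : α → ℕ) :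
    (Nat.multinomial s m : K) ^ 2 / Nat.multinomial s (2 • m) =
      (∏ a ∈ s, ((m a).centralBinom : K)) / (∑ a ∈ s, m a).centralBinom := by
  have hf (n : ℕ) : (n.factorial : K) ≠ 0 := Nat.cast_ne_zero.2 n.factorial_ne_zero
  have hc (n : ℕ) : (n.centralBinom : K) ≠ 0 := Nat.cast_ne_zero.2 n.centralBinom_ne_zero
  have := prod_ne_zero_iff.2 fun a (_ : a ∈ s) => hf (m a)
  have := prod_ne_zero_iff.2 fun a (_ : a ∈ s) => hc (m a)
  simp only [Nat.cast_multinomial_eq_div, Pi.smul_apply, smul_eq_mul, ← mul_sum,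
    Nat.factorial_two_mul_eq_centralBinom_mul_sq, Nat.cast_mul, Nat.cast_pow, prod_mul_distrib,
    prod_pow]
  field_simp [hf, hc]

end Field

theorem ctReal_eq_choose_div_choose (d t : ℕ) :
    ctReal d t = Ring.choose (-(1 / 2) : ℝ) t / Ring.choose (-(d / 2) : ℝ) t := by
  rw [Ring.choose_neg_div_two, Ring.choose_neg_div_two,
    mul_div_mul_right _ _ (by positivity), ctReal]
  simp only [add_comm (1 : ℝ)]

theorem sum_multinomial_sq_div_multinomial_two_nsmul (ι : Type*) [Fintype ι] [DecidableEq ι]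
    (t : ℕ) :
    ∑ m ∈ piAntidiag (univ : Finset ι) t,
        (Nat.multinomial univ m : ℝ) ^ 2 / Nat.multinomial univ (2 • m) =
      (ctReal (Fintype.card ι) t)⁻¹ := by
  rw [sum_congr rfl fun m hm => by
      rw [Nat.multinomial_sq_div_multinomial_two_nsmul, (mem_piAntidiag.1 hm).1],
    ← sum_div, sum_piAntidiag_prod_centralBinom, card_univ,
    Nat.centralBinom_eq_neg_four_pow_mul_choose,
    mul_div_mul_left _ _ (pow_ne_zero _ (by norm_num)), ctReal_eq_choose_div_choose, inv_div]

theorem Finset.card_piAntidiag_nat_eq_choose {α : Type*} [DecidableEq α] (s : Finset α) (n : ℕ) :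
    #(piAntidiag s n) = (#s + n - 1).choose n := by
  rw [← card_finsuppAntidiag_nat_eq_choose, finsuppAntidiag, card_map, card_attach]

theorem Finset.sum_piAntidiag_comp_nsmul_le {ι : Type*} [Fintype ι] [DecidableEq ι] {n : ℕ}
    (hn : n ≠ 0) (t : ℕ) {f : (ι → ℕ) → ℝ} (hf : ∀ s, 0 ≤ f s) :
    ∑ m ∈ piAntidiag (univ : Finset ι) t, f (n • m) ≤ ∑ s ∈ piAntidiag univ (n * t), f s := by
  have h := sum_map (piAntidiag (univ : Finset ι) t) ⟨(n • ·), nsmul_right_injective hn⟩ f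
  rw [map_nsmul_piAntidiag_univ t hn] at h
  exact h.symm.trans_le <| sum_le_sum_of_subset_of_nonneg (filter_subset _ _) fun s _ _ => hf s

section InnerProduct

variable {𝕜 ι : Type*} [RCLike 𝕜] [Fintype ι] [DecidableEq ι]

theorem inner_pow_eq_sum_piAntidiag (u v : EuclideanSpace 𝕜 ι) (t : ℕ) :
    inner 𝕜 u v ^ t = ∑ m ∈ piAntidiag univ t,
      (Nat.multinomial univ m : 𝕜) * (conj (∏ a, u a ^ m a) * ∏ a, v a ^ m a) := by
  simp only [PiLp.inner_apply, RCLike.inner_apply', sum_pow_eq_sum_piAntidiag, map_prod, map_pow,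
    ← prod_mul_distrib, mul_pow]

theorem norm_pow_two_mul_eq_sum_piAntidiag (v : EuclideanSpace 𝕜 ι) (t : ℕ) :
    ‖v‖ ^ (2 * t) = ∑ m ∈ piAntidiag univ t,
      (Nat.multinomial univ m : ℝ) * ‖∏ a, v a ^ m a‖ ^ 2 := by
  rw [pow_mul, EuclideanSpace.norm_sq_eq, sum_pow_eq_sum_piAntidiag]
  simp only [norm_prod, norm_pow, ← prod_pow, ← pow_mul, mul_comm 2]

end InnerProduct

section FramePotential

variable {𝕜 ι κ : Type*} [RCLike 𝕜] [Fintype ι]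

theorem sum_sum_norm_sq_weighted_inner_eq (P : Finset κ) (μ : κ → ℝ) (w : ι → κ → 𝕜) :
    ∑ j, ∑ k, ‖∑ m ∈ P, (μ m : 𝕜) * (conj (w j m) * w k m)‖ ^ 2 =
      ∑ m ∈ P, ∑ m' ∈ P, μ m * μ m' * ‖∑ j, conj (w j m) * w j m'‖ ^ 2 := by
  apply RCLike.ofReal_injective (K := 𝕜)
  simp only [RCLike.ofReal_pow, ← RCLike.mul_conj, map_sum, map_mul, RCLike.conj_conj,
    RCLike.conj_ofReal, sum_mul, mul_sum]
  simp only [sum_comm (s := (univ : Finset ι)) (t := P)]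
  rw [sum_comm]
  refine sum_congr rfl fun m _ => sum_congr rfl fun m' _ => ?_
  rw [sum_comm]
  refine sum_congr rfl fun k _ => sum_congr rfl fun j _ => ?_
  ring

theorem sq_sum_weighted_norm_sq_le_card_mul (P : Finset κ) {μ : κ → ℝ} (hμ : ∀ m ∈ P, 0 ≤ μ m)
    (w : ι → κ → 𝕜) :
    (∑ j, ∑ m ∈ P, μ m * ‖w j m‖ ^ 2) ^ 2 ≤
      #P * ∑ j, ∑ k, ‖∑ m ∈ P, (μ m : 𝕜) * (conj (w j m) * w k m)‖ ^ 2 := by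
  have hdiag (m : κ) : ‖∑ j, conj (w j m) * w j m‖ = ∑ j, ‖w j m‖ ^ 2 := by
    simp only [RCLike.conj_mul, ← RCLike.ofReal_pow, ← RCLike.ofReal_sum, RCLike.norm_ofReal]
    exact abs_of_nonneg (sum_nonneg fun j _ => sq_nonneg _)
  rw [sum_sum_norm_sq_weighted_inner_eq, sum_comm]
  calc (∑ m ∈ P, ∑ j, μ m * ‖w j m‖ ^ 2) ^ 2
      ≤ #P * ∑ m ∈ P, (μ m * ∑ j, ‖w j m‖ ^ 2) ^ 2 := by
        simp only [← mul_sum]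
        exact sq_sum_le_card_mul_sum_sq
    _ ≤ #P * ∑ m ∈ P, ∑ m' ∈ P, μ m * μ m' * ‖∑ j, conj (w j m) * w j m'‖ ^ 2 := by
        gcongr with m hm
        rw [← hdiag, mul_pow, sq (μ m)]
        exact single_le_sum (f := fun m' => μ m * μ m' * ‖∑ j, conj (w j m) * w j m'‖ ^ 2)
          (fun m' hm' => mul_nonneg (mul_nonneg (hμ m hm) (hμ m' hm')) (sq_nonneg _)) hm

end FramePotential

theorem welch_bound_rclike {𝕜 ι ι' : Type*} [RCLike 𝕜] [Fintype ι] [Fintype ι']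
    (v : ι' → EuclideanSpace 𝕜 ι) (t : ℕ) :
    ctComplex (Fintype.card ι) t * (∑ l, ‖v l‖ ^ (2 * t)) ^ 2 ≤
      ∑ j, ∑ k, ‖inner 𝕜 (v j) (v k)‖ ^ (2 * t) := by
  classical
  have hframe := sq_sum_weighted_norm_sq_le_card_mul (piAntidiag (univ : Finset ι) t)
    (fun m _ => Nat.cast_nonneg (Nat.multinomial univ m)) fun l m => ∏ a, v l a ^ m a
  simp only [RCLike.ofReal_natCast, ← inner_pow_eq_sum_piAntidiag, norm_pow, ← pow_mul',
    ← norm_pow_two_mul_eq_sum_piAntidiag, card_piAntidiag_nat_eq_choose, card_univ] at hframe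
  rw [ctComplex, add_comm, one_div_mul_eq_div]
  exact div_le_of_le_mul₀ (Nat.cast_nonneg _) (by positivity) (mul_comm (_ : ℝ) _ ▸ hframe)

theorem welch_bound_real {ι ι' : Type*} [Fintype ι] [Fintype ι'] (v : ι' → EuclideanSpace ℝ ι)
    (t : ℕ) :
    ctReal (Fintype.card ι) t * (∑ l, ‖v l‖ ^ (2 * t)) ^ 2 ≤
      ∑ j, ∑ k, |inner ℝ (v j) (v k)| ^ (2 * t) := by
  classical
  set M : (ι → ℕ) → ℝ := fun m => Nat.multinomial univ m
  set X : (ι → ℕ) → ℝ := fun s => ∑ j, ∏ a, v j a ^ s a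
  have hM (m : ι → ℕ) : 0 < M m := Nat.cast_pos.2 (Nat.multinomial_pos _ _)
  have hrhs : ∑ j, ∑ k, |inner ℝ (v j) (v k)| ^ (2 * t) =
      ∑ s ∈ piAntidiag univ (2 * t), M s * X s ^ 2 := by
    simp only [(even_two_mul t).pow_abs, inner_pow_eq_sum_piAntidiag, conj_trivial, M, X, sq,
      sum_mul, mul_sum]
    simp only [sum_comm (s := (univ : Finset ι')) (t := piAntidiag univ (2 * t))]
    exact sum_congr rfl fun s _ => sum_comm
  have hlhs : ∑ l, ‖v l‖ ^ (2 * t) = ∑ m ∈ piAntidiag univ t, M m * X (2 • m) := by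
    simp only [norm_pow_two_mul_eq_sum_piAntidiag, Real.norm_eq_abs, sq_abs, M, X, mul_sum,
      ← prod_pow, ← pow_mul', Pi.smul_apply, smul_eq_mul]
    exact sum_comm
  have hweights : ∑ m ∈ piAntidiag univ t, M m ^ 2 / M (2 • m) = (ctReal (Fintype.card ι) t)⁻¹ :=
    sum_multinomial_sq_div_multinomial_two_nsmul ι t
  calc ctReal (Fintype.card ι) t * (∑ l, ‖v l‖ ^ (2 * t)) ^ 2
      = (∑ m ∈ piAntidiag univ t, M m * X (2 • m)) ^ 2 / (ctReal (Fintype.card ι) t)⁻¹ := by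
        rw [hlhs, div_inv_eq_mul, mul_comm]
    _ ≤ ∑ m ∈ piAntidiag univ t, (M m * X (2 • m)) ^ 2 / (M m ^ 2 / M (2 • m)) :=
        hweights ▸ sq_sum_div_le_sum_sq_div _ _ fun m _ => div_pos (pow_pos (hM m) 2) (hM _)
    _ = ∑ m ∈ piAntidiag univ t, M (2 • m) * X (2 • m) ^ 2 := by
        refine sum_congr rfl fun m _ => ?_
        have := (hM m).ne'
        have := (hM (2 • m)).ne'
        field_simp
    _ ≤ ∑ s ∈ piAntidiag univ (2 * t), M s * X s ^ 2 :=
        sum_piAntidiag_comp_nsmul_le two_ne_zero t fun s => mul_nonneg (hM s).le (sq_nonneg _)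
    _ = ∑ j, ∑ k, |inner ℝ (v j) (v k)| ^ (2 * t) := hrhs.symm

theorem sidelnikov_welch_inequality_general (d t : ℕ) :
    (∀ (n : ℕ) (v : Fin n → EuclideanSpace ℝ (Fin d)), (∃ j, v j ≠ 0) →
      ctReal d t * (∑ l, ‖v l‖ ^ (2 * t)) ^ 2 ≤
        ∑ j, ∑ k, |(inner ℝ (v j) (v k) : ℝ)| ^ (2 * t)) ∧
    (∀ (n : ℕ) (v : Fin n → EuclideanSpace ℂ (Fin d)), (∃ j, v j ≠ 0) →
      ctComplex d t * (∑ l, ‖v l‖ ^ (2 * t)) ^ 2 ≤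
        ∑ j, ∑ k, ‖(inner ℂ (v j) (v k) : ℂ)‖ ^ (2 * t)) := by
  refine ⟨fun n v _ => ?_, fun n v _ => ?_⟩
  · simpa only [Fintype.card_fin] using welch_bound_real v t
  · simpa only [Fintype.card_fin] using welch_bound_rclike v t

/-- The Sidel'nikov–Welch inequality: for vectors `v_1,…,v_n` in `𝔽^d` (`𝔽 = ℝ, ℂ`),
not all zero, `Σ Σ |⟨v_j,v_k⟩|^{2t} ≥ c_t(𝔽^d) (Σ ‖v_ℓ‖^{2t})²`. -/
theorem sidelnikov_welch_inequality (d t : ℕ) (hd : 1 ≤ d) (ht : 1 ≤ t) :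
    (∀ (n : ℕ) (v : Fin n → EuclideanSpace ℝ (Fin d)), (∃ j, v j ≠ 0) →
      ctReal d t * (∑ l, ‖v l‖ ^ (2 * t)) ^ 2 ≤
        ∑ j, ∑ k, |(inner ℝ (v j) (v k) : ℝ)| ^ (2 * t)) ∧
    (∀ (n : ℕ) (v : Fin n → EuclideanSpace ℂ (Fin d)), (∃ j, v j ≠ 0) →
      ctComplex d t * (∑ l, ‖v l‖ ^ (2 * t)) ^ 2 ≤
        ∑ j, ∑ k, ‖(inner ℂ (v j) (v k) : ℂ)‖ ^ (2 * t)) :=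
  sidelnikov_welch_inequality_general d t
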